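/- The set of pairs (x,y) ∈ ℂ² with p₁′(x,y) = 0 and p₂′(x,y) = 0 is infinite. -/

import Mathlib

/-- The polynomial p₁′ from the singular-vector relations at level 1/2. -/
noncomputable def p₁' (x y : ℂ) : ℂ :=
  -(81/32) * x + (135/64) * x^2 + (729/64) * x^3 - (297/32) * x^4 - (81/16) * x^5
    + (27/8) * x^6 + (81/32) * y - (135/64) * y^2 - (729/64) * y^3 + (297/32) * y^4
    + (81/16) * y^5 - (27/8) * y^6 - (729/64) * x * y^2 + (297/16) * x * y^3
    + (243/16) * x * y^4 - (27/2) * x * y^5 + (729/64) * x^2 * y + (81/8) * x^2 * y^3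
    - (135/8) * x^2 * y^4 - (297/16) * x^3 * y - (81/8) * x^3 * y^2
    - (243/16) * x^4 * y + (135/8) * x^4 * y^2 + (27/2) * x^5 * y

/-- The polynomial p₂′ from the singular-vector relations at level 1/2. -/
noncomputable def p₂' (x y : ℂ) : ℂ :=
  (81/32) * x - (135/64) * x^2 - (729/64) * x^3 + (297/32) * x^4 + (81/16) * x^5
    - (27/8) * x^6 - (459/64) * x * y - (243/64) * x * y^2 + 27 * x * y^3
    - (405/16) * x * y^4 + (27/4) * x * y^5 - (243/16) * x^2 * y
    + (2025/32) * x^2 * y^2 - (567/8) * x^2 * y^3 + (189/8) * x^2 * y^4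
    + (729/16) * x^3 * y - (243/4) * x^3 * y^2 + 27 * x^3 * y^3
    - (81/8) * x^4 * y + (27/4) * x^4 * y^2 - (27/4) * x^5 * y

/-! Both polynomials vanish identically on the line `x + y = 1`, i.e. `x + y - 1` divides each
of them, so the common zero set contains a copy of `ℂ`. -/

theorem p₁'_self_one_sub (x : ℂ) : p₁' x (1 - x) = 0 := by
  unfold p₁'
  ring

theorem p₂'_self_one_sub (x : ℂ) : p₂' x (1 - x) = 0 := by
  unfold p₂'
  ring

/-- The common zero set of p₁′ and p₂′ in ℂ² is infinite. -/
theorem stmt_11 :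
    {p : ℂ × ℂ | p₁' p.1 p.2 = 0 ∧ p₂' p.1 p.2 = 0}.Infinite :=
  Set.infinite_of_injective_forall_mem (f := fun x : ℂ => (x, 1 - x))
    (fun _ _ h => congrArg Prod.fst h)
    (fun x => ⟨p₁'_self_one_sub x, p₂'_self_one_sub x⟩)
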